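/- Let (A_n) be an Appell sequence and define the ring homomorphism φ_A : Λ → ℝ[x] by φ_A(h_m) = A_m/m!. Then for every partition λ, φ_A(s_λ) = F_λ · A_λ / |λ|!, where A_λ = Wr[A_{n_1},...,A_{n_r}] / ∏_{i<j}(n_j − n_i) is the Wronskian Appell polynomial with degree vector (n_1,...,n_r) = (λ_r, λ_{r-1}+1, ..., λ_1+r−1). -/

import Mathlib

open scoped BigOperators

noncomputable section

namespace WAPpr

/-- A partition, represented as a finitely supported function `ℕ →₀ ℕ`
(0-indexed: `lam i` is the `(i+1)`-st part). -/
abbrev Ptn := ℕ →₀ ℕ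

/-- `f` is a genuine partition: the parts are weakly decreasing. -/
def IsPtn (f : Ptn) : Prop := ∀ ⦃i j : ℕ⦄, i ≤ j → f j ≤ f i

/-- The size `|λ|` of a partition. -/
def psize (f : Ptn) : ℕ := f.sum fun _ m => m

/-- The length (number of nonzero parts) of a partition. -/
def plen (f : Ptn) : ℕ := f.support.card

/-- `λ` covers `μ` in Young's lattice. -/
def Covers (lam mu : Ptn) : Prop :=
  IsPtn lam ∧ IsPtn mu ∧ (∀ i, mu i ≤ lam i) ∧ psize mu + 1 = psize lam

/-- The number of standard Young tableaux of shape `λ`, i.e. of saturated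
chains from `∅` to `λ` in Young's lattice. -/
def F (lam : Ptn) : ℕ :=
  Nat.card {T : Fin (psize lam + 1) → Ptn //
    T 0 = 0 ∧ T (Fin.last (psize lam)) = lam ∧
    ∀ i : Fin (psize lam), Covers (T i.succ) (T i.castSucc)}

/-- `conjF lam j` is the number of parts of `lam` that are `> j`,
i.e. the `(j+1)`-st part of the conjugate partition. -/
def conjF (lam : Ptn) (j : ℕ) : ℕ := (lam.support.filter fun i => j < lam i).card

/-- The cells of the Young diagram of `λ` (0-indexed). -/
def cells (lam : Ptn) : Finset (ℕ × ℕ) :=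
  lam.support.biUnion fun i => ({i} : Finset ℕ) ×ˢ Finset.range (lam i)

/-- The hook length of the (0-indexed) cell `(i,j)` of `λ`. -/
def hook (lam : Ptn) (i j : ℕ) : ℕ := lam i + conjF lam j - i - j - 1

/-- The hook length product `H(λ)`. -/
def hookProd (lam : Ptn) : ℕ := ∏ c ∈ cells lam, hook lam c.1 c.2

/-- The degree vector `n_λ = (λ_r, λ_{r-1}+1, …, λ_1+r-1)` (0-indexed). -/
def degv (lam : Ptn) (i : ℕ) : ℕ := lam (plen lam - 1 - i) + i

/-- The Vandermonde factor `Δ(n_λ) = ∏_{i<j} (n_j - n_i)`. -/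
def vand (lam : Ptn) : ℝ :=
  ∏ p ∈ (Finset.range (plen lam) ×ˢ Finset.range (plen lam)).filter
      (fun p => p.1 < p.2),
    ((degv lam p.2 : ℝ) - (degv lam p.1 : ℝ))

/-- The Wronskian determinant of `r` polynomials. -/
def wronskian (r : ℕ) (f : ℕ → Polynomial ℝ) : Polynomial ℝ :=
  Matrix.det (Matrix.of fun i j : Fin r =>
    (fun q => Polynomial.derivative q)^[(j : ℕ)] (f (i : ℕ)))

/-- The Wronskian Appell polynomial `A_λ = Wr[A_{n_1},…,A_{n_r}] / Δ(n_λ)`. -/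
def wap (A : ℕ → Polynomial ℝ) (lam : Ptn) : Polynomial ℝ :=
  (vand lam)⁻¹ • wronskian (plen lam) (fun i => A (degv lam i))

/-- `(A_n)` is an Appell sequence: `A_0 = 1` and `A_n' = n·A_{n-1}`. -/
def IsAppell (A : ℕ → Polynomial ℝ) : Prop :=
  A 0 = 1 ∧ ∀ n : ℕ, 1 ≤ n → Polynomial.derivative (A n) = n • A (n - 1)

/-- The set of cells of the skew diagram `λ/μ`. -/
def skewSet (lam mu : Ptn) : Set (ℕ × ℕ) := {p | mu p.1 ≤ p.2 ∧ p.2 < lam p.1}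

/-- Two cells are adjacent (share an edge). -/
def Adj (p q : ℕ × ℕ) : Prop :=
  (p.1 = q.1 ∧ (p.2 + 1 = q.2 ∨ q.2 + 1 = p.2)) ∨
  (p.2 = q.2 ∧ (p.1 + 1 = q.1 ∨ q.1 + 1 = p.1))

/-- A set of cells is (edge-)connected. -/
def ConnectedIn (S : Set (ℕ × ℕ)) : Prop :=
  ∀ a b : S, Relation.ReflTransGen (fun x y : S => Adj x.1 y.1) a b

/-- A set of cells contains no 2×2 square. -/
def No2x2 (S : Set (ℕ × ℕ)) : Prop :=
  ¬ ∃ i j : ℕ, (i, j) ∈ S ∧ (i + 1, j) ∈ S ∧ (i, j + 1) ∈ S ∧ (i + 1, j + 1) ∈ S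

/-- `λ/μ` is a rim hook of size `k`. -/
def IsRimHook (lam mu : Ptn) (k : ℕ) : Prop :=
  IsPtn lam ∧ IsPtn mu ∧ (∀ i, mu i ≤ lam i) ∧ psize mu + k = psize lam ∧
  ConnectedIn (skewSet lam mu) ∧ No2x2 (skewSet lam mu)

/-- The height of the rim hook `λ/μ`: one less than the number of rows. -/
def rhHeight (lam mu : Ptn) : ℕ :=
  Nat.card {i : ℕ | ∃ j, (i, j) ∈ skewSet lam mu} - 1

/-! ### Symmetric functions, `h`-model:
`Λ = ℚ[h_1, h_2, …]` with `X m = h_{m+1}`. -/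

abbrev SymF := MvPolynomial ℕ ℚ

/-- The complete homogeneous symmetric function `h_m` (as a free generator). -/
def hsym (m : ℕ) : SymF := if m = 0 then 1 else MvPolynomial.X (m - 1)

/-- `h_k` extended to integer indices by `0` for `k < 0`. -/
def hz (k : ℤ) : SymF := if k < 0 then 0 else hsym k.toNat

/-- The Schur function `s_λ`, via the Jacobi–Trudi formula
`s_λ = det[h_{λ_i - i + j}]`. -/
def schur (lam : Ptn) : SymF :=
  Matrix.det (Matrix.of fun i j : Fin (plen lam) =>
    hz ((lam (i : ℕ) : ℤ) - (i : ℕ) + (j : ℕ)))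

/-! ### Symmetric functions, `p`-model:
`Λ_ℚ = ℚ[p_1, p_2, …]` with `X m = p_{m+1}`. -/

/-- The power sum `p_m` (as a free generator; only used for `m ≥ 1`). -/
def psym (m : ℕ) : SymF := MvPolynomial.X (m - 1)

/-- The complete homogeneous symmetric functions, expressed in the power
sums via the Newton recursion `n h_n = ∑_{k=1}^n p_k h_{n-k}`. -/
def hh : ℕ → SymF
  | 0 => 1
  | (n + 1) => ((n + 1 : ℚ))⁻¹ • ∑ k ∈ Finset.range (n + 1), psym (k + 1) * hh (n - k)
termination_by n => n
decreasing_by exact Nat.lt_succ_of_le (Nat.sub_le _ _)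

/-- `hh` extended to integer indices. -/
def hzP (k : ℤ) : SymF := if k < 0 then 0 else hh k.toNat

/-- The Schur function in the `p`-model, via Jacobi–Trudi. -/
def schurP (lam : Ptn) : SymF :=
  Matrix.det (Matrix.of fun i j : Fin (plen lam) =>
    hzP ((lam (i : ℕ) : ℤ) - (i : ℕ) + (j : ℕ)))

/-- The elementary symmetric functions in the `p`-model: `e_n = ω(h_n)` where
`ω(p_k) = (-1)^{k-1} p_k`. -/
def ee (n : ℕ) : SymF :=
  MvPolynomial.bind₁ (fun m : ℕ => ((-1 : ℚ) ^ m) • MvPolynomial.X m) (hh n)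

/-- The exponential of a power series with coefficients in `Λ_ℚ`
(correct for series with zero constant term). -/
def pexp (S : PowerSeries SymF) : PowerSeries SymF :=
  PowerSeries.mk fun n =>
    ∑ k ∈ Finset.range (n + 1), (k.factorial : ℚ)⁻¹ • (PowerSeries.coeff n (S ^ k))

/-- The exponential of a real power series (correct for series with zero
constant term). -/
def rexp (S : PowerSeries ℝ) : PowerSeries ℝ :=
  PowerSeries.mk fun n =>
    ∑ k ∈ Finset.range (n + 1), (k.factorial : ℝ)⁻¹ * (PowerSeries.coeff n (S ^ k))

/-- The moment exponential generating function `f_A(t) = ∑ A_k(0) t^k/k!`. -/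
def fser (A : ℕ → Polynomial ℝ) : PowerSeries ℝ :=
  PowerSeries.mk fun k => (A k).eval 0 / k.factorial

/-- The column partition `(1^n)`. -/
def colP (n : ℕ) : Ptn :=
  Finsupp.onFinset (Finset.range n) (fun i => if i < n then 1 else 0)
    (by intro a ha; rw [Finset.mem_range]; by_contra h; simp [h] at ha)

/-- The conjugate partition `λ'`. -/
def conjP (lam : Ptn) : Ptn :=
  Finsupp.onFinset (Finset.range (lam.support.sup fun i => lam i))
    (fun j => conjF lam j)
    (by
      intro a ha
      rw [Finset.mem_range]
      obtain ⟨i, hi⟩ := Finset.card_pos.mp (Nat.pos_of_ne_zero ha)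
      rw [Finset.mem_filter] at hi
      exact lt_of_lt_of_le hi.2 (Finset.le_sup hi.1))

end WAPpr

end

/-!
Under `φ_A` the Jacobi–Trudi determinant becomes `det [A_{n_i - j} / (n_i - j)!]`, and since
`A_n^{(j)} = n!/(n-j)! · A_{n-j}`, the Wronskian `Wr[A_{n_1}, …, A_{n_r}]` is `∏ n_i!` times the
same determinant. What remains is the hook length formula in Frobenius' form
`F_λ ∏ n_i! = |λ|! Δ(n_λ)`. It follows by induction on `|λ|` from `F_λ = ∑ F_{λ - corner}`:
removing the corner cell of a row lowers one entry of `n_λ` by one, and the matching identity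
`(∑ n_i - ∑ i) Δ(n) = ∑_j n_j Δ(n - e_j)` comes from differentiating the Wronskian of the
monomials `x^{n_j}`, which equals `Δ(n) x^{∑ n_i - ∑ i}`.
-/

namespace WAPpr

open Finset

section Partitions

open Finsupp

variable {lam mu : Ptn} {k : ℕ}

theorem psize_eq_degree (f : Ptn) : psize f = f.degree := rfl

theorem IsPtn.support_eq_range (h : IsPtn lam) : lam.support = range (plen lam) := by
  have hdown : ∀ {i j}, i ≤ j → j ∈ lam.support → i ∈ lam.support := fun hij hj =>
    mem_support_iff.mpr fun h0 => mem_support_iff.mp hj (Nat.eq_zero_of_le_zero (h0 ▸ h hij))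
  ext k
  rw [mem_range]
  constructor
  · intro hk
    have := card_le_card (s := range (k + 1)) fun i hi =>
      hdown (Nat.lt_succ_iff.mp (mem_range.mp hi)) hk
    rw [card_range] at this
    exact this
  · intro hk
    by_contra hk'
    have := card_le_card (t := range k) fun i hi =>
      mem_range.mpr <| lt_of_not_ge fun hki => hk' (hdown hki hi)
    simp only [card_range] at this
    exact absurd hk (not_lt.mpr this)

theorem IsPtn.apply_eq_zero (h : IsPtn lam) (hk : plen lam ≤ k) : lam k = 0 := by
  simpa [← notMem_support_iff, h.support_eq_range] using hk

def corners (f : Ptn) : Finset ℕ := f.support.filter fun k => f (k + 1) < f k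

theorem mem_corners {f : Ptn} : k ∈ corners f ↔ f (k + 1) < f k := by
  simp only [corners, mem_filter, mem_support_iff, and_iff_right_iff_imp]
  omega

theorem ne_zero_of_mem_corners {f : Ptn} (hk : k ∈ corners f) : f k ≠ 0 :=
  mem_support_iff.mp (mem_filter.mp hk).1

theorem IsPtn.lt_of_mem_corners {L : ℕ} (h : IsPtn lam) (hL : plen lam ≤ L)
    (hk : k ∈ corners lam) : k < L :=
  lt_of_not_ge fun hkL => ne_zero_of_mem_corners hk (h.apply_eq_zero (hL.trans hkL))

theorem tsub_single_apply (f : Ptn) (k i : ℕ) :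
    (f - single k 1 : Ptn) i = if i = k then f k - 1 else f i := by
  by_cases hi : i = k <;> simp [hi]

theorem IsPtn.tsub_single (h : IsPtn lam) (hk : lam (k + 1) < lam k) :
    IsPtn (lam - single k 1) := by
  intro i j hij
  simp only [tsub_single_apply]
  have := h hij
  have : i = k → k < j → lam j ≤ lam (k + 1) := fun _ hkj => h hkj
  split_ifs <;> subst_vars <;> omega

theorem single_le_of_ne_zero {f : Ptn} (hk : f k ≠ 0) : single k 1 ≤ f := by
  intro i
  by_cases hi : i = k <;> simp [hi, Nat.one_le_iff_ne_zero.mpr hk]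

theorem psize_tsub_single {f : Ptn} (hk : f k ≠ 0) : psize (f - single k 1) + 1 = psize f := by
  simpa [psize_eq_degree] using congrArg degree (tsub_add_cancel_of_le (single_le_of_ne_zero hk))

theorem covers_tsub_single (h : IsPtn lam) (hk : k ∈ corners lam) :
    Covers lam (lam - single k 1) := by
  exact ⟨h, h.tsub_single (mem_corners.mp hk), fun i => tsub_le_self (a := lam) i,
    psize_tsub_single (ne_zero_of_mem_corners hk)⟩

theorem Covers.exists_eq_tsub_single (hc : Covers lam mu) :
    ∃ k ∈ corners lam, mu = lam - single k 1 := by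
  obtain ⟨-, hmu, hle, hsize⟩ := hc
  have hle : mu ≤ lam := hle
  obtain ⟨k, hk⟩ : ∃ k, lam - mu = single k 1 := by
    rw [← Finsupp.sum_eq_one_iff]
    have := congrArg degree (tsub_add_cancel_of_le hle)
    rw [map_add, ← psize_eq_degree, ← psize_eq_degree, ← psize_eq_degree] at this
    change psize (lam - mu) = 1
    omega
  have hmu_eq : mu = lam - single k 1 := by
    rw [← hk, tsub_tsub_cancel_of_le hle]
  refine ⟨k, mem_corners.mpr ?_, hmu_eq⟩
  have h1 := hmu (Nat.le_add_right k 1)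
  simp only [hmu_eq, tsub_single_apply, if_neg (show k + 1 ≠ k by omega), if_true] at h1
  have h2 : lam k ≠ 0 := fun h0 => by
    have := congrArg (· k) hk
    simp [h0] at this
  omega

theorem tsub_single_injOn (lam : Ptn) :
    Set.InjOn (fun k => lam - single k 1) (corners lam) := by
  intro k hk k' hk' heq
  exact single_left_injective one_ne_zero <|
    (tsub_right_inj (single_le_of_ne_zero (ne_zero_of_mem_corners hk))
      (single_le_of_ne_zero (ne_zero_of_mem_corners hk'))).mp heq

noncomputable def cornersEquivCovers (h : IsPtn lam) : corners lam ≃ {mu // Covers lam mu} :=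
  Equiv.ofBijective (fun k => ⟨lam - single k.1 1, covers_tsub_single h k.2⟩) <| by
    refine ⟨fun k k' heq => Subtype.ext <|
      tsub_single_injOn lam k.2 k'.2 (congrArg Subtype.val heq), fun ⟨mu, hmu⟩ => ?_⟩
    obtain ⟨k, hk, rfl⟩ := hmu.exists_eq_tsub_single
    exact ⟨⟨k, hk⟩, rfl⟩

end Partitions

section Chains

open Finsupp

abbrev Chains (N : ℕ) (ν : Ptn) : Type :=
  {T : Fin (N + 1) → Ptn // T 0 = 0 ∧ T (Fin.last N) = ν ∧
    ∀ i : Fin N, Covers (T i.succ) (T i.castSucc)}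

theorem F_eq_card_chains (lam : Ptn) : F lam = Nat.card (Chains (psize lam) lam) := rfl

variable {lam : Ptn}

def chainsSuccEquiv (N : ℕ) (lam : Ptn) :
    Chains (N + 1) lam ≃ Σ mu : {mu // Covers lam mu}, Chains N mu where
  toFun T := ⟨⟨T.1 (Fin.last N).castSucc, by simpa [T.2.2.1] using T.2.2.2 (Fin.last N)⟩,
    ⟨Fin.init T.1, T.2.1, rfl, fun i => by simpa [Fin.init] using T.2.2.2 i.castSucc⟩⟩
  invFun S := ⟨Fin.snoc S.2.1 lam, by
    refine ⟨(Fin.snoc_castSucc (α := fun _ => Ptn) (p := S.2.1) (x := lam) 0).trans S.2.2.1,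
      Fin.snoc_last _ _, fun i => ?_⟩
    induction i using Fin.lastCases with
    | last => simpa [Fin.succ_last, S.2.2.2.1] using S.1.2
    | cast i =>
      rw [Fin.succ_castSucc, Fin.snoc_castSucc, Fin.snoc_castSucc]
      exact S.2.2.2.2 i⟩
  left_inv T := Subtype.ext <| by simp [← T.2.2.1]
  right_inv S := Sigma.subtype_ext (Subtype.ext <| by simpa using S.2.2.2.1)
    (Fin.init_snoc (α := fun _ => Ptn) _ _)

instance finite_covers (lam : Ptn) : Finite {mu // Covers lam mu} :=
  Set.Finite.subset (Set.finite_Iic lam) fun _ hmu => hmu.2.2.1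

instance subsingleton_chains_zero (lam : Ptn) : Subsingleton (Chains 0 lam) :=
  ⟨fun T T' => Subtype.ext <| funext fun i => by rw [Fin.fin_one_eq_zero i, T.2.1, T'.2.1]⟩

instance finite_chains : ∀ (N : ℕ) (lam : Ptn), Finite (Chains N lam)
  | 0, _ => Finite.of_subsingleton
  | N + 1, lam => by
    have := fun mu => finite_chains N mu
    exact Finite.of_equiv _ (chainsSuccEquiv N lam).symm

theorem F_zero : F 0 = 1 := by
  rw [F_eq_card_chains, show psize 0 = 0 from rfl]
  exact Nat.card_of_subsingleton ⟨fun _ => 0, rfl, rfl, Fin.elim0⟩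

theorem F_eq_sum_corners (h : IsPtn lam) (hlam : lam ≠ 0) :
    F lam = ∑ k ∈ corners lam, F (lam - single k 1) := by
  obtain ⟨N, hN⟩ : ∃ N, psize lam = N + 1 :=
    Nat.exists_eq_succ_of_ne_zero <| by rwa [psize_eq_degree, Ne, degree_eq_zero_iff]
  have hsize : ∀ k ∈ corners lam, psize (lam - single k 1) = N := fun k hk => by
    have := psize_tsub_single (ne_zero_of_mem_corners hk)
    omega
  have := Fintype.ofFinite {mu // Covers lam mu}
  rw [F_eq_card_chains, hN, Nat.card_congr (chainsSuccEquiv N lam), Nat.card_sigma,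
    ← (cornersEquivCovers h).sum_comp, ← sum_coe_sort (corners lam)]
  refine sum_congr rfl fun k _ => ?_
  rw [F_eq_card_chains, hsize k k.2]
  rfl

end Chains

section Wronskian

open Polynomial Matrix

variable {R : Type*} [CommRing R]

theorem derivative_det {n : Type*} [Fintype n] [DecidableEq n] (M : Matrix n n R[X]) :
    derivative M.det = ∑ j, (M.updateCol j fun i => derivative (M i j)).det := by
  simp only [det_apply', map_sum, derivative_mul, derivative_intCast, zero_mul, zero_add,
    derivative_prod_finset, mul_sum]
  rw [sum_comm]
  refine sum_congr rfl fun j _ => sum_congr rfl fun σ _ => ?_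
  rw [← prod_erase_mul _ _ (mem_univ j), updateCol_self]
  congr 2
  exact prod_congr rfl fun a ha => by rw [updateCol_ne (ne_of_mem_erase ha)]

variable (R) in
noncomputable def monomialWronskian {L : ℕ} (m : Fin L → ℕ) : Matrix (Fin L) (Fin L) R[X] :=
  of fun i j => derivative^[i] (X ^ m j)

theorem X_pow_mul_iterate_derivative_X_pow (i m : ℕ) :
    (X : R[X]) ^ i * derivative^[i] (X ^ m) = C (m.descFactorial i : R) * X ^ m := by
  rw [iterate_derivative_X_pow_eq_smul, smul_eq_C_mul]
  rcases le_or_gt i m with him | him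
  · rw [mul_left_comm, ← pow_add, Nat.add_sub_cancel' him]
  · simp [Nat.descFactorial_eq_zero_iff_lt.mpr him]

theorem det_descFactorial {L : ℕ} (m : Fin L → ℕ) :
    (of fun i j : Fin L => ((m j).descFactorial i : R)).det =
      (vandermonde fun i => (m i : R)).det := by
  have h := det_eval_matrixOfPolynomials_eq_det_vandermonde (fun i => (m i : ℤ))
    (fun i => descPochhammer ℤ i) (fun i => descPochhammer_natDegree ℤ i)
    (fun i => monic_descPochhammer ℤ i)
  have := congrArg (Int.castRingHom R) h
  rw [RingHom.map_det, RingHom.map_det] at this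
  rw [← det_transpose]
  convert this.symm using 2 <;> ext i j <;>
    simp [vandermonde_apply, descPochhammer_eval_eq_descFactorial]

theorem X_pow_mul_det_monomialWronskian {L : ℕ} (m : Fin L → ℕ) :
    X ^ (∑ i : Fin L, (i : ℕ)) * (monomialWronskian R m).det =
      C (vandermonde fun i => (m i : R)).det * X ^ ∑ i, m i := by
  calc X ^ (∑ i : Fin L, (i : ℕ)) * (monomialWronskian R m).det
      = (of fun i j : Fin L => (X : R[X]) ^ (i : ℕ) * monomialWronskian R m i j).det := by
        rw [det_mul_column, prod_pow_eq_pow_sum]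
    _ = (of fun i j : Fin L => X ^ m j * C ((m j).descFactorial i : R)).det := by
        congr 1
        ext i j
        rw [of_apply, of_apply, monomialWronskian, of_apply, X_pow_mul_iterate_derivative_X_pow,
          mul_comm]
    _ = (∏ j, X ^ m j) * (of fun i j : Fin L => C ((m j).descFactorial i : R)).det :=
        det_mul_row _ _
    _ = C (vandermonde fun i => (m i : R)).det * X ^ ∑ i, m i := by
        rw [prod_pow_eq_pow_sum, ← det_descFactorial, RingHom.map_det, mul_comm]
        rfl

theorem det_monomialWronskian {L : ℕ} {m : Fin L → ℕ} (h : ∑ i : Fin L, (i : ℕ) ≤ ∑ i, m i) :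
    (monomialWronskian R m).det =
      C (vandermonde fun i => (m i : R)).det * X ^ (∑ i, m i - ∑ i : Fin L, (i : ℕ)) := by
  apply (isRegular_X_pow (R := R) (∑ i : Fin L, (i : ℕ))).left
  simp only [X_pow_mul_det_monomialWronskian]
  rw [mul_left_comm, ← pow_add, Nat.add_sub_cancel' h]

theorem derivative_det_monomialWronskian {L : ℕ} (m : Fin L → ℕ) :
    derivative (monomialWronskian R m).det =
      ∑ j, C (m j : R) * (monomialWronskian R (Function.update m j (m j - 1))).det := by
  rw [derivative_det]
  refine sum_congr rfl fun j _ => ?_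
  rw [← updateCol_eq_self (monomialWronskian R (Function.update m j (m j - 1))) j,
    ← det_updateCol_smul]
  congr 1
  ext i k
  rcases eq_or_ne k j with rfl | hk
  · simp only [updateCol_self, monomialWronskian, of_apply, Pi.smul_apply, smul_eq_mul,
      Function.update_self]
    rw [← Function.iterate_succ_apply' derivative, Function.iterate_succ_apply, derivative_X_pow,
      iterate_derivative_C_mul]
  · simp [updateCol_ne hk, monomialWronskian, Function.update_of_ne hk]

theorem sum_update_pred_add_one {L : ℕ} {m : Fin L → ℕ} {j : Fin L} (hj : m j ≠ 0) :
    ∑ i, Function.update m j (m j - 1) i + 1 = ∑ i, m i := by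
  rw [sum_update_of_mem (mem_univ j), sdiff_singleton_eq_erase, ← add_sum_erase _ m (mem_univ j)]
  omega

theorem natCast_mul_det_vandermonde_eq_sum {L : ℕ} {m : Fin L → ℕ}
    (h : ∑ i : Fin L, (i : ℕ) < ∑ i, m i) :
    ((∑ i, m i - ∑ i : Fin L, (i : ℕ) : ℕ) : R) * (vandermonde fun i => (m i : R)).det =
      ∑ j, (m j : R) * (vandermonde fun i => (Function.update m j (m j - 1) i : R)).det := by
  set N := ∑ i, m i - ∑ i : Fin L, (i : ℕ)
  have hterm : ∀ j, C (m j : R) * (monomialWronskian R (Function.update m j (m j - 1))).det =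
      C ((m j : R) * (vandermonde fun i => (Function.update m j (m j - 1) i : R)).det) *
        X ^ (N - 1) := by
    intro j
    by_cases hj : m j = 0
    · simp [hj]
    have hsum := sum_update_pred_add_one hj
    rw [det_monomialWronskian (by omega), C_mul, mul_assoc]
    congr 3
    omega
  have hderiv := derivative_det_monomialWronskian (R := R) m
  rw [det_monomialWronskian h.le, derivative_C_mul_X_pow, sum_congr rfl fun j _ => hterm j,
    ← sum_mul, ← map_sum, mul_comm (vandermonde _).det] at hderiv
  exact C_injective ((isRegular_X_pow _).right hderiv)

end Wronskian

section HookFormula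

open Matrix

variable {R : Type*} [CommRing R]

theorem det_vandermonde_val_eq_prod_factorial (L : ℕ) :
    (vandermonde fun i : Fin L => (i : R)).det = ∏ i : Fin L, ((i : ℕ).factorial : R) := by
  cases L with
  | zero => simp
  | succ L =>
    rw [det_vandermonde_id_eq_superFactorial, ← Nat.prod_range_succ_factorial, Nat.cast_prod,
      Fin.prod_univ_eq_prod_range (fun i => (i.factorial : R))]

theorem prod_factorial_eq_mul_prod_factorial_update {ι : Type*} [Fintype ι] [DecidableEq ι]
    {m : ι → ℕ} {j : ι} (hj : m j ≠ 0) :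
    ∏ i, ((m i).factorial : R) = m j * ∏ i, ((Function.update m j (m j - 1) i).factorial : R) := by
  rw [← Finset.mul_prod_erase _ _ (mem_univ j), ← Finset.mul_prod_erase _ _ (mem_univ j),
    Function.update_self, ← mul_assoc, ← Nat.cast_mul, Nat.mul_factorial_pred hj]
  congr 1
  exact prod_congr rfl fun i hi => by rw [Function.update_of_ne (ne_of_mem_erase hi)]

/-- `degv lam = degVec (plen lam) lam`; lengths `L > plen f` are needed because removing a cell
can shorten a partition. -/
def degVec (L : ℕ) (f : Ptn) : Fin L → ℕ := fun i => f (L - 1 - i) + i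

variable {f : Ptn} {L k : ℕ}

theorem IsPtn.degVec_strictMono (h : IsPtn f) : StrictMono (degVec L f) := fun i j hij => by
  have := h (show L - 1 - (j : ℕ) ≤ L - 1 - i by omega)
  simp only [degVec]
  omega

theorem IsPtn.sum_degVec (h : IsPtn f) (hL : plen f ≤ L) :
    ∑ i, degVec L f i = psize f + ∑ i : Fin L, (i : ℕ) := by
  have hsupp : f.support ⊆ range L := h.support_eq_range ▸ range_subset_range.mpr hL
  simp only [degVec]
  rw [sum_add_distrib, Fin.sum_univ_eq_sum_range (fun i => f (L - 1 - i)),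
    sum_range_reflect f L, psize, Finsupp.sum,
    sum_subset hsupp fun i _ hi => Finsupp.notMem_support_iff.mp hi]

theorem degVec_tsub_single (hk : k ∈ corners f) {b : Fin L} (hb : (b : ℕ) + k = L - 1) :
    degVec L (f - Finsupp.single k 1) = Function.update (degVec L f) b (degVec L f b - 1) := by
  have hk := mem_corners.mp hk
  funext i
  rcases eq_or_ne i b with rfl | hi
  · have hik : L - 1 - i = k := by omega
    simp only [degVec, Function.update_self, tsub_single_apply, hik, ↓reduceIte]
    omega
  · have : L - 1 - i ≠ k := fun h => hi (Fin.ext (by omega))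
    simp [degVec, Function.update_of_ne hi, tsub_single_apply, this]

theorem IsPtn.degVec_mul_det_vandermonde_update_eq_zero (h : IsPtn f) (hL : plen f ≤ L)
    {b : Fin L} (hb : L - 1 - b ∉ corners f) :
    (degVec L f b : R) *
      (vandermonde fun i => (Function.update (degVec L f) b (degVec L f b - 1) i : R)).det = 0 := by
  set k := L - 1 - (b : ℕ) with hk
  have hbk : (b : ℕ) + k = L - 1 := by have := b.isLt; omega
  have hflat : f (k + 1) = f k := by
    have := h (Nat.le_add_right k 1)
    rw [mem_corners] at hb
    omega
  rcases Nat.eq_zero_or_pos (b : ℕ) with hb0 | hb0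
  · have : degVec L f b = 0 := by
      have := h.apply_eq_zero (k := k + 1) (by omega)
      simp only [degVec, ← hk]
      omega
    simp [this]
  · set a : Fin L := ⟨b - 1, by omega⟩
    have hab : a ≠ b := by simp [a, Fin.ext_iff]; omega
    have ha : degVec L f a = degVec L f b - 1 := by
      simp only [degVec, a, show L - 1 - (b - 1) = k + 1 by omega, hflat, ← hk]
      omega
    refine mul_eq_zero_of_right _ (det_zero_of_row_eq hab (funext fun j => ?_))
    simp [vandermonde_apply, Function.update_of_ne hab, ha]

theorem plen_tsub_single_le (f : Ptn) (k : ℕ) : plen (f - Finsupp.single k 1) ≤ plen f :=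
  card_le_card (Finsupp.support_mono tsub_le_self)

theorem degVec_zero (L : ℕ) : degVec L 0 = fun i : Fin L => (i : ℕ) := by
  funext i
  simp [degVec]

theorem prod_factorial_degVec_tsub_single (hk : k ∈ corners f) {b : Fin L}
    (hb : (b : ℕ) + k = L - 1) :
    ∏ i, ((degVec L f i).factorial : R) =
      degVec L f b * ∏ i, ((degVec L (f - Finsupp.single k 1) i).factorial : R) := by
  have hb_ne : degVec L f b ≠ 0 := by
    have := ne_zero_of_mem_corners hk
    simp only [degVec, show L - 1 - b = k by omega]
    omega
  rw [degVec_tsub_single hk hb, prod_factorial_eq_mul_prod_factorial_update hb_ne]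

theorem IsPtn.sum_corners_reflect {M : Type*} [AddCommMonoid M] (h : IsPtn f) (hL : plen f ≤ L)
    (hL0 : 0 < L) (g : Fin L → M) (hg : ∀ b : Fin L, L - 1 - b ∉ corners f → g b = 0) :
    ∑ k ∈ corners f, g ⟨L - 1 - k, by omega⟩ = ∑ b, g b := by
  refine sum_of_injOn _ (fun k hk k' hk' heq => ?_) (fun _ _ => mem_coe.mpr (mem_univ _))
    (fun b _ hb => hg b fun hmem => hb ⟨L - 1 - b, hmem, Fin.ext ?_⟩) fun _ _ => rfl
  · have := h.lt_of_mem_corners hL hk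
    have := h.lt_of_mem_corners hL hk'
    simp only [Fin.mk.injEq] at heq
    omega
  · have := b.isLt
    simp only
    omega

/-- The hook length formula in Frobenius' form. -/
theorem IsPtn.F_mul_prod_factorial_degVec (h : IsPtn f) (hL : plen f ≤ L) :
    (F f : R) * ∏ i, ((degVec L f i).factorial : R) =
      (psize f).factorial * (vandermonde fun i => (degVec L f i : R)).det := by
  induction hn : psize f generalizing f with
  | zero =>
    obtain rfl : f = 0 := (Finsupp.degree_eq_zero_iff f).mp hn
    simp [F_zero, degVec_zero, det_vandermonde_val_eq_prod_factorial]
  | succ n ih =>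
    have hf : f ≠ 0 := by rintro rfl; simp [psize] at hn
    have hL0 : 0 < L := by
      obtain ⟨i, hi⟩ := Finsupp.support_nonempty_iff.mpr hf
      rw [h.support_eq_range, mem_range] at hi
      omega
    set m := degVec L f
    have hkey := natCast_mul_det_vandermonde_eq_sum (R := R) (m := m)
      (by rw [h.sum_degVec hL]; omega)
    rw [h.sum_degVec hL, hn, Nat.add_sub_cancel] at hkey
    calc (F f : R) * ∏ i, ((m i).factorial : R)
        = ∑ k ∈ corners f, (F (f - Finsupp.single k 1) : R) * ∏ i, ((m i).factorial : R) := by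
          rw [F_eq_sum_corners h hf, Nat.cast_sum, Finset.sum_mul]
      _ = ∑ k ∈ corners f, (n.factorial : R) * ((m ⟨L - 1 - k, by omega⟩ : R) *
            (vandermonde fun i => (degVec L (f - Finsupp.single k 1) i : R)).det) := by
          refine sum_congr rfl fun k hk => ?_
          have hkL := h.lt_of_mem_corners hL hk
          have hsize : psize (f - Finsupp.single k 1) = n := by
            have := psize_tsub_single (ne_zero_of_mem_corners hk)
            omega
          rw [prod_factorial_degVec_tsub_single hk (b := ⟨L - 1 - k, by omega⟩)
              (by dsimp only; omega), mul_left_comm, ih (h.tsub_single (mem_corners.mp hk))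
              ((plen_tsub_single_le f k).trans hL) hsize, mul_left_comm]
      _ = (n.factorial : R) * ∑ b, (m b : R) *
            (vandermonde fun i => (Function.update m b (m b - 1) i : R)).det := by
          rw [← Finset.mul_sum, ← h.sum_corners_reflect hL hL0 _
            fun b hb => h.degVec_mul_det_vandermonde_update_eq_zero hL hb]
          refine congrArg _ (sum_congr rfl fun k hk => ?_)
          have hkL := h.lt_of_mem_corners hL hk
          rw [degVec_tsub_single hk (b := ⟨L - 1 - k, by omega⟩) (by dsimp only; omega)]
      _ = ((n + 1).factorial : R) * (vandermonde fun i => (m i : R)).det := by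
          rw [← hkey, Nat.factorial_succ]
          push_cast
          ring

end HookFormula

section Appell

open Polynomial Matrix

variable {A : ℕ → ℝ[X]}

theorem IsAppell.iterate_derivative (hA : IsAppell A) (k n : ℕ) :
    derivative^[k] (A n) = n.descFactorial k • A (n - k) := by
  induction k generalizing n with
  | zero => simp
  | succ k ih =>
    rw [Function.iterate_succ_apply]
    cases n with
    | zero => simp [hA.1]
    | succ n =>
      rw [hA.2 (n + 1) (Nat.le_add_left 1 n), Nat.add_sub_cancel, iterate_derivative_smul, ih,
        smul_smul, Nat.succ_descFactorial_succ, Nat.succ_sub_succ]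

noncomputable def scaledAppell (A : ℕ → ℝ[X]) (k : ℤ) : ℝ[X] :=
  if k < 0 then 0 else ((k.toNat.factorial : ℝ))⁻¹ • A k.toNat

theorem IsAppell.iterate_derivative_eq_smul_scaledAppell (hA : IsAppell A) (n j : ℕ) :
    derivative^[j] (A n) = (n.factorial : ℝ) • scaledAppell A (n - j) := by
  rw [hA.iterate_derivative, scaledAppell]
  rcases le_or_gt j n with hjn | hjn
  · rw [if_neg (by omega), show ((n : ℤ) - j).toNat = n - j by omega, smul_smul,
      ← Nat.cast_smul_eq_nsmul ℝ, ← Nat.factorial_mul_descFactorial hjn, Nat.cast_mul]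
    field_simp
  · rw [Nat.descFactorial_eq_zero_iff_lt.mpr hjn, zero_smul, if_pos (by omega), smul_zero]

theorem IsAppell.wronskian_eq (hA : IsAppell A) (r : ℕ) (n : ℕ → ℕ) :
    wronskian r (fun i => A (n i)) =
      (∏ i : Fin r, ((n i).factorial : ℝ)) •
        (of fun i j : Fin r => scaledAppell A ((n i : ℤ) - (j : ℕ))).det := by
  have hentries : (of fun i j : Fin r => (fun q => derivative q)^[(j : ℕ)] (A (n i))) =
      of fun i j : Fin r => C ((n i).factorial : ℝ) * scaledAppell A ((n i : ℤ) - (j : ℕ)) := by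
    ext1 i j
    exact (hA.iterate_derivative_eq_smul_scaledAppell _ _).trans (smul_eq_C_mul _)
  rw [wronskian, hentries]
  exact (det_mul_column _ _).trans (by rw [← map_prod, ← smul_eq_C_mul]; rfl)

theorem IsAppell.aeval_hz (hA : IsAppell A) (k : ℤ) :
    MvPolynomial.aeval (fun m : ℕ => (((m + 1).factorial : ℝ))⁻¹ • A (m + 1)) (hz k) =
      scaledAppell A k := by
  rw [hz, scaledAppell]
  split_ifs with hk
  · exact map_zero _
  rw [hsym]
  split_ifs with hk0
  · simp [hk0, hA.1]
  · rw [MvPolynomial.aeval_X, Nat.sub_add_cancel (Nat.one_le_iff_ne_zero.mpr hk0)]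

theorem IsAppell.aeval_schur (hA : IsAppell A) (lam : Ptn) :
    MvPolynomial.aeval (fun m : ℕ => (((m + 1).factorial : ℝ))⁻¹ • A (m + 1)) (schur lam) =
      (of fun i j : Fin (plen lam) => scaledAppell A ((degv lam i : ℤ) - (j : ℕ))).det := by
  rw [schur, AlgHom.map_det, ← det_submatrix_equiv_self Fin.revPerm]
  congr 1
  ext1 i j
  simp only [AlgHom.mapMatrix_apply, submatrix_apply, map_apply, of_apply, hA.aeval_hz,
    Fin.revPerm_apply, Fin.val_rev, degv]
  rw [show plen lam - (i + 1) = plen lam - 1 - i by omega]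
  congr 1
  omega

end Appell

section Vandermonde

open Matrix

theorem prod_filter_lt_range_product {M : Type*} [CommMonoid M] (r : ℕ) (g : ℕ → ℕ → M) :
    ∏ p ∈ (range r ×ˢ range r).filter (fun p => p.1 < p.2), g p.1 p.2 =
      ∏ i : Fin r, ∏ j ∈ Ioi i, g i j := by
  rw [prod_filter, prod_product, ← Fin.prod_univ_eq_prod_range]
  refine prod_congr rfl fun i _ => ?_
  rw [← Fin.prod_univ_eq_prod_range (fun j => if (i : ℕ) < j then g i j else 1), ← prod_filter]
  congr 1
  ext j
  simp

theorem vand_eq_det_vandermonde (lam : Ptn) :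
    vand lam = (vandermonde fun i : Fin (plen lam) => (degVec (plen lam) lam i : ℝ)).det := by
  rw [vand, det_vandermonde, prod_filter_lt_range_product (plen lam)
    fun a b => (degv lam b : ℝ) - degv lam a]
  rfl

end Vandermonde

end WAPpr

open WAPpr in
/-- the homomorphism `φ_A : Λ → ℝ[x]` with `φ_A(h_m) = A_m/m!`
sends `s_λ` to `F_λ A_λ / |λ|!`. -/
theorem phi_schur (A : ℕ → Polynomial ℝ) (hA : IsAppell A) (lam : Ptn)
    (h : IsPtn lam) :
    MvPolynomial.aeval (fun m : ℕ => (((m + 1).factorial : ℝ))⁻¹ • A (m + 1))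
        (schur lam) =
      ((F lam : ℝ) / ((psize lam).factorial : ℝ)) • wap A lam := by
  have hscalar := h.F_mul_prod_factorial_degVec (R := ℝ) le_rfl
  rw [← vand_eq_det_vandermonde] at hscalar
  have hvand : vand lam ≠ 0 := by
    rw [vand_eq_det_vandermonde, Matrix.det_vandermonde_ne_zero_iff]
    exact Nat.cast_injective.comp h.degVec_strictMono.injective
  have hcoeff : (F lam : ℝ) / (psize lam).factorial * (vand lam)⁻¹ *
      ∏ i : Fin (plen lam), ((degv lam i).factorial : ℝ) = 1 := by
    field_simp
    exact hscalar
  rw [hA.aeval_schur, wap, hA.wronskian_eq, smul_smul, smul_smul, hcoeff, one_smul]
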